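/- Let λ be a nonzero integer, let f(X) = X²(X−λ), let R = ℤ[X]/(f), and let p be a prime not dividing λ. Then in the formal power series ring ℤ⟦X⟧ one has (Σ_{l≥0} a_R(p^l) X^l) · (1 − X)² · (1 − pX²) = 1; that is, the local ideal zeta factor of R at p equals (1 − p^{−s})^{−2} (1 − p^{1−2s})^{−1}. -/

import Mathlib

/-!
Write `f = X²(X - λ)`. An ideal `J ⊇ (f)` of `ℤ[X]` with `|ℤ[X]/J| = pˡ` contains `pˡ`; since
`λ² = X² - (X - λ)(X + λ)` is prime to `p`, the ideals `J + (X²)` and `J + (X - λ)` are comaximal,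
so `J` is their intersection and, by the Chinese remainder theorem, their indices `pᵏ` and `pˡ⁻ᵏ`
multiply to `pˡ`. Above `X - λ` there is exactly one ideal of each index, the preimage of `pˡ⁻ᵏℤ`
under `g ↦ g(λ)`. Above `X²` the ideals of index `pᵏ` are `(X², pᵇX, pᵏ⁻ᵇ + cX)` with `2b ≤ k`
and `0 ≤ c < pᵇ` (a Hermite normal form), pairwise distinct. Hence
`a(pˡ) = ∑_{k ≤ l} ∑_{2b ≤ k} pᵇ`: the inner sums have generating function
`(1 - X)⁻¹(1 - pX²)⁻¹`, and summing over `k ≤ l` contributes another factor `(1 - X)⁻¹`.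
-/

/-- `idealCount R k` is the number of ideals `I` of `R` such that `R ⧸ I` is finite
with exactly `k` elements. -/
noncomputable def idealCount (R : Type) [CommRing R] (k : ℕ) : ℕ :=
  Set.ncard {I : Ideal R | Nat.card (R ⧸ I) = k}

open Polynomial Finset

namespace PowerSeries

variable {R : Type*} [CommRing R]

theorem mk_sum_range_mul_one_sub_X (f : ℕ → R) :
    mk (fun n => ∑ k ∈ range (n + 1), f k) * (1 - X) = mk f := by
  ext (_ | n)
  · simp
  · simp [mul_sub, coeff_succ_mul_X, sum_range_succ]

theorem mk_geom_sum_mul_one_sub_C_mul_X_sq (q : R) :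
    mk (fun n => ∑ b ∈ range (n / 2 + 1), q ^ b) * (1 - C q * X ^ 2) = mk 1 := by
  rw [mul_sub, mul_one, mul_comm (C q), ← mul_assoc]
  ext (_ | _ | n)
  · simp
  · simp [coeff_mul_C, coeff_mul_X_pow']
  · rw [map_sub, coeff_mul_C, show n + 1 + 1 = n + 2 from rfl, coeff_mul_X_pow, coeff_mk,
      coeff_mk, show (n + 2) / 2 + 1 = n / 2 + 1 + 1 by omega, sum_range_succ', sum_mul]
    simp [pow_succ]

end PowerSeries

namespace Ideal

variable {R S : Type*} [CommRing R] [CommRing S]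

theorem natCard_quotient_comap_of_surjective {f : R →+* S} (hf : Function.Surjective f)
    (I : Ideal S) : Nat.card (R ⧸ I.comap f) = Nat.card (S ⧸ I) := by
  have hker : RingHom.ker ((Quotient.mk I).comp f) = I.comap f := by
    rw [← RingHom.comap_ker, mk_ker]
  exact Nat.card_congr ((quotEquivOfEq hker.symm).trans
    (RingHom.quotientKerEquivOfSurjective (Quotient.mk_surjective.comp hf))).toEquiv

theorem natCast_natCard_quotient_mem (J : Ideal R) : (Nat.card (R ⧸ J) : R) ∈ J := by
  rw [← Quotient.eq_zero_iff_mem, map_natCast, ← nsmul_one]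
  exact card_nsmul_eq_zero'

theorem natCard_quotient_inf {I J : Ideal R} (h : I ⊔ J = ⊤) :
    Nat.card (R ⧸ I ⊓ J) = Nat.card (R ⧸ I) * Nat.card (R ⧸ J) := by
  rw [Nat.card_congr (quotientInfEquivQuotientProd I J (isCoprime_iff_sup_eq.mpr h)).toEquiv,
    Nat.card_prod]

theorem eq_sup_inf_sup {J F₁ F₂ : Ideal R} (h : F₁ * F₂ ≤ J) (hcop : J ⊔ F₁ ⊔ (J ⊔ F₂) = ⊤) :
    J = (J ⊔ F₁) ⊓ (J ⊔ F₂) := by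
  refine le_antisymm (le_inf le_sup_left le_sup_left) ?_
  rw [← mul_eq_inf_of_coprime hcop, sup_mul, mul_sup, mul_sup]
  exact sup_le (sup_le mul_le_right mul_le_left) (sup_le mul_le_right h)

end Ideal

theorem Int.ideal_eq_span_natCard (I : Ideal ℤ) : I = Ideal.span {(Nat.card (ℤ ⧸ I) : ℤ)} := by
  obtain ⟨g, rfl⟩ : ∃ g, I = Ideal.span {g} := ⟨_, (Ideal.span_singleton_generator I).symm⟩
  rw [← Int.span_natAbs, Nat.card_congr (Int.quotientSpanNatEquivZMod _).toEquiv, Nat.card_zmod]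

theorem idealCount_eq_ncard_of_surjective {R S : Type} [CommRing R] [CommRing S] {f : R →+* S}
    (hf : Function.Surjective f) (n : ℕ) :
    idealCount S n = {J : Ideal R | RingHom.ker f ≤ J ∧ Nat.card (R ⧸ J) = n}.ncard := by
  have : {J : Ideal R | RingHom.ker f ≤ J ∧ Nat.card (R ⧸ J) = n} =
      Ideal.comap f '' {I : Ideal S | Nat.card (S ⧸ I) = n} := by
    ext J
    constructor
    · rintro ⟨hJ, hn⟩
      have hJ' : (J.map f).comap f = J := by
        rw [Ideal.comap_map_of_surjective' f hf, sup_eq_left.mpr hJ]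
      refine ⟨J.map f, show Nat.card (S ⧸ J.map f) = n from ?_, hJ'⟩
      rw [← Ideal.natCard_quotient_comap_of_surjective hf, hJ', hn]
    · rintro ⟨I, hI, rfl⟩
      exact ⟨Ideal.comap_mono bot_le, (Ideal.natCard_quotient_comap_of_surjective hf I).trans hI⟩
  rw [idealCount, this, Set.ncard_image_of_injective _ (Ideal.comap_injective_of_surjective f hf)]

namespace Polynomial

theorem mem_iff_of_X_sq_mem {R : Type*} [CommRing R] {J : Ideal R[X]} (hX : X ^ 2 ∈ J)
    {f : R[X]} : f ∈ J ↔ C (f.coeff 1) * X + C (f.coeff 0) ∈ J := by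
  have hdvd : X ^ 2 ∣ f - (C (f.coeff 1) * X + C (f.coeff 0)) := by
    rw [X_pow_dvd_iff]
    intro d hd
    interval_cases d <;> simp
  have hmem := Ideal.mem_of_dvd _ hdvd hX
  exact ⟨fun hf => by simpa using J.sub_mem hf hmem, fun hL => by simpa using J.add_mem hmem hL⟩

theorem eq_top_of_X_sq_mem_of_X_sub_C_mem {R : Type*} [CommRing R] {lam q : R}
    (hq : IsCoprime q lam) {I : Ideal R[X]} (hX : X ^ 2 ∈ I) (hXlam : X - C lam ∈ I)
    (hqI : C q ∈ I) : I = ⊤ := by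
  have hlam : C (lam ^ 2) ∈ I := by
    convert I.sub_mem hX (I.mul_mem_right (X + C lam) hXlam) using 1
    rw [map_pow]
    ring
  obtain ⟨a, b, hab⟩ := hq.pow_right (n := 2)
  rw [I.eq_top_iff_one, ← map_one C, ← hab, map_add, map_mul, map_mul]
  exact I.add_mem (I.mul_mem_left _ hqI) (I.mul_mem_left _ hlam)

theorem eq_comap_evalRingHom_of_X_sub_C_mem {lam : ℤ} {J : Ideal ℤ[X]} (h : X - C lam ∈ J) :
    J = (Ideal.span {(Nat.card (ℤ[X] ⧸ J) : ℤ)}).comap (evalRingHom lam) := by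
  have hsurj : Function.Surjective (evalRingHom lam) := fun n => ⟨C n, eval_C⟩
  have hJ : (J.map (evalRingHom lam)).comap (evalRingHom lam) = J := by
    rw [Ideal.comap_map_of_surjective' _ hsurj, ker_evalRingHom, sup_eq_left, Ideal.span_le,
      Set.singleton_subset_iff]
    exact h
  nth_rewrite 1 [← hJ]
  rw [Int.ideal_eq_span_natCard (J.map _), ← Ideal.natCard_quotient_comap_of_surjective hsurj, hJ]

theorem natCard_quotient_comap_evalRingHom (lam : ℤ) (n : ℕ) :
    Nat.card (ℤ[X] ⧸ (Ideal.span {(n : ℤ)}).comap (evalRingHom lam)) = n := by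
  rw [Ideal.natCard_quotient_comap_of_surjective (fun m => ⟨C m, eval_C⟩),
    Nat.card_congr (Int.quotientSpanNatEquivZMod n).toEquiv, Nat.card_zmod]

theorem X_sub_C_mem_comap_evalRingHom {R : Type*} [CommRing R] (a : R) (I : Ideal R) :
    X - C a ∈ I.comap (evalRingHom a) := by
  simp

end Polynomial

noncomputable def xSqIdeal (u v c : ℕ) : Ideal ℤ[X] :=
  Ideal.span {X ^ 2, C (v : ℤ) * X, C (u : ℤ) + C (c : ℤ) * X}

section xSqIdeal

variable {u v c : ℕ}

theorem X_sq_mem_xSqIdeal : X ^ 2 ∈ xSqIdeal u v c := Ideal.subset_span (by simp)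

theorem C_mul_X_mem_xSqIdeal : C (v : ℤ) * X ∈ xSqIdeal u v c := Ideal.subset_span (by simp)

theorem C_add_C_mul_X_mem_xSqIdeal : C (u : ℤ) + C (c : ℤ) * X ∈ xSqIdeal u v c :=
  Ideal.subset_span (by simp)

theorem xSqIdeal_le {J : Ideal ℤ[X]} (hX : X ^ 2 ∈ J) (hv : C (v : ℤ) * X ∈ J)
    (hu : C (u : ℤ) + C (c : ℤ) * X ∈ J) : xSqIdeal u v c ≤ J := by
  rw [xSqIdeal, Ideal.span_le]
  rintro f (rfl | rfl | rfl) <;> assumption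

theorem mem_xSqIdeal (hvu : v ∣ u) (hu : u ≠ 0) {f : ℤ[X]} :
    f ∈ xSqIdeal u v c ↔
      (u : ℤ) ∣ f.coeff 0 ∧ (u * v : ℤ) ∣ u * f.coeff 1 - c * f.coeff 0 := by
  constructor
  · intro hf
    induction hf using Submodule.span_induction with
    | mem g hg =>
      simp only [Set.mem_insert_iff, Set.mem_singleton_iff] at hg
      rcases hg with rfl | rfl | rfl <;> simp [coeff_X, mul_comm]
    | zero => simp
    | add g h _ _ hg hh =>
      simp only [coeff_add]
      refine ⟨dvd_add hg.1 hh.1, ?_⟩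
      simpa only [mul_add, add_sub_add_comm] using dvd_add hg.2 hh.2
    | smul g h _ hh =>
      obtain ⟨⟨d, hd⟩, hh1⟩ := hh
      obtain ⟨w, rfl⟩ := hvu
      have hcoeff1 : (g * h).coeff 1 = g.coeff 0 * h.coeff 1 + g.coeff 1 * h.coeff 0 := by
        simp [coeff_mul, Finset.Nat.antidiagonal_succ]
      rw [smul_eq_mul, mul_coeff_zero, hcoeff1]
      refine ⟨dvd_mul_of_dvd_right ⟨d, hd⟩ _, ?_⟩
      -- `u v ∣ u h₀` because `v ∣ u ∣ h₀`
      have : (↑(v * w) * (g.coeff 0 * h.coeff 1 + g.coeff 1 * h.coeff 0)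
          - c * (g.coeff 0 * h.coeff 0) : ℤ) = g.coeff 0 * (↑(v * w) * h.coeff 1 - c * h.coeff 0)
            + ↑(v * w) * v * (w * g.coeff 1 * d) := by
        rw [hd]; push_cast; ring
      rw [this]
      exact dvd_add (dvd_mul_of_dvd_right hh1 _) (dvd_mul_right _ _)
  · rintro ⟨⟨d, hd⟩, e, he⟩
    have hf1 : f.coeff 1 = c * d + v * e := by
      refine mul_left_cancel₀ (show (u : ℤ) ≠ 0 by exact_mod_cast hu) ?_
      rw [hd] at he
      linear_combination he
    rw [mem_iff_of_X_sq_mem X_sq_mem_xSqIdeal, hd, hf1]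
    convert add_mem (Ideal.mul_mem_left _ (C d) C_add_C_mul_X_mem_xSqIdeal)
      (Ideal.mul_mem_left _ (C e) C_mul_X_mem_xSqIdeal) using 1
    simp only [map_add, map_mul]
    ring

theorem C_mul_X_mem_xSqIdeal_iff (hvu : v ∣ u) (hu : u ≠ 0) {n : ℤ} :
    C n * X ∈ xSqIdeal u v c ↔ (v : ℤ) ∣ n := by
  rw [mem_xSqIdeal hvu hu]
  simp [mul_dvd_mul_iff_left (show (u : ℤ) ≠ 0 by exact_mod_cast hu)]

theorem le_xSqIdeal {J : Ideal ℤ[X]} (hvu : v ∣ u) (hu : u ≠ 0) (hX : X ^ 2 ∈ J)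
    (h0 : ∀ f ∈ J, (u : ℤ) ∣ f.coeff 0) (h1 : ∀ n : ℤ, C n * X ∈ J → (v : ℤ) ∣ n)
    (hgen : C (u : ℤ) + C (c : ℤ) * X ∈ J) : J ≤ xSqIdeal u v c := by
  intro f hf
  obtain ⟨d, hd⟩ := h0 f hf
  have hlin : C (f.coeff 1 - d * c) * X ∈ J := by
    convert J.sub_mem ((mem_iff_of_X_sq_mem hX).mp hf) (J.mul_mem_left (C d) hgen) using 1
    rw [hd]
    simp only [map_sub, map_mul]
    ring
  obtain ⟨e, he⟩ := h1 _ hlin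
  exact (mem_xSqIdeal hvu hu).mpr ⟨⟨d, hd⟩, e, by rw [hd]; linear_combination (u : ℤ) * he⟩

theorem natCard_quotient_xSqIdeal (hvu : v ∣ u) (hu : u ≠ 0) :
    Nat.card (ℤ[X] ⧸ xSqIdeal u v c) = u * v := by
  set J := xSqIdeal u v c with hJ
  -- `ℤ[X]/J` is an extension of `ℤ/u` (constant coefficient) by the cyclic group of order `v`
  -- generated by the class of `X`.
  let φ : ℤ[X] ⧸ J →+* ZMod u := Ideal.Quotient.lift J ((Int.castRingHom _).comp (evalRingHom 0))
    fun f hf => by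
      simpa [← coeff_zero_eq_eval_zero, ZMod.intCast_zmod_eq_zero_iff_dvd] using
        ((mem_xSqIdeal hvu hu).mp hf).1
  have hφ : Function.Surjective φ := fun z => ⟨Ideal.Quotient.mk J (C z.cast), by simp [φ]⟩
  have hφf (f : ℤ[X]) : φ (Ideal.Quotient.mk J f) = 0 ↔ (u : ℤ) ∣ f.coeff 0 := by
    simp [φ, ← coeff_zero_eq_eval_zero, ZMod.intCast_zmod_eq_zero_iff_dvd]
  have hzsmul (k : ℤ) : k • Ideal.Quotient.mk J X = Ideal.Quotient.mk J (C k * X) := by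
    rw [← map_zsmul, zsmul_eq_mul, ← C_eq_intCast, Int.cast_id]
  have hker : φ.toAddMonoidHom.ker = AddSubgroup.zmultiples (Ideal.Quotient.mk J X) := by
    ext x
    obtain ⟨f, rfl⟩ := Ideal.Quotient.mk_surjective x
    rw [AddMonoidHom.mem_ker, RingHom.toAddMonoidHom_eq_coe, AddMonoidHom.coe_coe, hφf,
      AddSubgroup.mem_zmultiples_iff]
    constructor
    · rintro ⟨d, hd⟩
      refine ⟨f.coeff 1 - d * c, ?_⟩
      rw [hzsmul, Ideal.Quotient.eq, hJ, mem_xSqIdeal hvu hu]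
      simp only [coeff_sub, coeff_C_mul, coeff_X_zero, coeff_X_one, hd]
      exact ⟨by simp, 0, by ring⟩
    · rintro ⟨k, hk⟩
      rw [← hφf, ← hk, hzsmul, hφf]
      simp
  have horder : addOrderOf (Ideal.Quotient.mk J X) = v := by
    have key (n : ℕ) : n • Ideal.Quotient.mk J X = 0 ↔ v ∣ n := by
      rw [← map_nsmul, Ideal.Quotient.eq_zero_iff_mem, nsmul_eq_mul, ← C_eq_natCast,
        C_mul_X_mem_xSqIdeal_iff hvu hu, Int.natCast_dvd_natCast]
    exact Nat.dvd_antisymm (addOrderOf_dvd_iff_nsmul_eq_zero.mpr ((key v).mpr dvd_rfl))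
      ((key _).mp (addOrderOf_nsmul_eq_zero _))
  rw [AddSubgroup.card_eq_card_quotient_mul_card_addSubgroup φ.toAddMonoidHom.ker,
    Nat.card_congr (QuotientAddGroup.quotientKerEquivOfSurjective φ.toAddMonoidHom hφ).toEquiv,
    Nat.card_zmod, hker, Nat.card_zmultiples, horder]

theorem exists_lt_C_add_C_mul_X_mem {J : Ideal ℤ[X]} {m : ℤ} (hv : v ≠ 0)
    (hvX : C (v : ℤ) * X ∈ J) (hm : C (u : ℤ) + C m * X ∈ J) :
    ∃ c < v, C (u : ℤ) + C (c : ℤ) * X ∈ J := by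
  set c := (m % v).toNat
  have hc : (c : ℤ) = m % v := Int.toNat_of_nonneg (Int.emod_nonneg _ (by exact_mod_cast hv))
  refine ⟨c, ?_, ?_⟩
  · have := Int.emod_lt_of_pos m (show (0 : ℤ) < v by positivity)
    omega
  · obtain ⟨e, he⟩ := Int.dvd_self_sub_of_emod_eq hc.symm
    convert J.sub_mem hm (J.mul_mem_left (C e) hvX) using 1
    rw [eq_add_of_sub_eq he]
    simp only [map_add, map_mul]
    ring

theorem exists_eq_xSqIdeal {J : Ideal ℤ[X]} (hX : X ^ 2 ∈ J) (hJ : Nat.card (ℤ[X] ⧸ J) ≠ 0) :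
    ∃ u v c : ℕ, v ∣ u ∧ u ≠ 0 ∧ c < v ∧ J = xSqIdeal u v c := by
  -- `u ℤ` is the ideal of constant coefficients of `J`, and `v ℤ` the ideal of `n` with `nX ∈ J`.
  set Sa : Ideal ℤ := J.map (evalRingHom 0)
  set Sb : Ideal ℤ := (J.restrictScalars ℤ).comap (LinearMap.toSpanSingleton ℤ ℤ[X] X)
  set u := Nat.card (ℤ ⧸ Sa)
  set v := Nat.card (ℤ ⧸ Sb)
  have hSa (n : ℤ) : n ∈ Sa ↔ (u : ℤ) ∣ n := by
    rw [← Ideal.mem_span_singleton, ← Int.ideal_eq_span_natCard]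
  have hSb (n : ℤ) : C n * X ∈ J ↔ (v : ℤ) ∣ n := by
    rw [← Ideal.mem_span_singleton, ← Int.ideal_eq_span_natCard, ← smul_eq_C_mul]
    rfl
  have h0 : ∀ f ∈ J, (u : ℤ) ∣ f.coeff 0 := fun f hf =>
    (hSa _).mp (by rw [coeff_zero_eq_eval_zero]; exact Ideal.mem_map_of_mem _ hf)
  have hu : u ≠ 0 := by
    rintro hu
    have := h0 _ J.natCast_natCard_quotient_mem
    simp_all
  obtain ⟨g, hg, hgu⟩ := (Ideal.mem_map_iff_of_surjective _ fun n => ⟨C n, eval_C⟩).mp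
    ((hSa u).mpr dvd_rfl)
  rw [coe_evalRingHom, ← coeff_zero_eq_eval_zero] at hgu
  have hgen : C (u : ℤ) + C (g.coeff 1) * X ∈ J := add_comm (C (g.coeff 1) * X) _ ▸ hgu ▸
    (mem_iff_of_X_sq_mem hX).mp hg
  have hvu : v ∣ u := by
    have := J.sub_mem (J.mul_mem_left X hgen) (J.mul_mem_left (C (g.coeff 1)) hX)
    exact Int.natCast_dvd_natCast.mp <| (hSb _).mp (by convert this using 1; ring)
  obtain ⟨c, hcv, hc⟩ := exists_lt_C_add_C_mul_X_mem (ne_zero_of_dvd_ne_zero hu hvu)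
    ((hSb v).mpr dvd_rfl) hgen
  exact ⟨u, v, c, hvu, hu, hcv, le_antisymm (le_xSqIdeal hvu hu hX h0 (fun n => (hSb n).mp) hc)
    (xSqIdeal_le hX ((hSb _).mpr dvd_rfl) hc)⟩

theorem eq_of_xSqIdeal_eq {u' v' c' : ℕ} (hvu : v ∣ u) (hu : u ≠ 0) (hc : c < v)
    (hvu' : v' ∣ u') (hu' : u' ≠ 0) (hc' : c' < v')
    (h : xSqIdeal u v c = xSqIdeal u' v' c') : u = u' ∧ v = v' ∧ c = c' := by
  have hv : v = v' := by
    have h₁ : C (v : ℤ) * X ∈ xSqIdeal u' v' c' := h ▸ C_mul_X_mem_xSqIdeal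
    have h₂ : C (v' : ℤ) * X ∈ xSqIdeal u v c := h ▸ C_mul_X_mem_xSqIdeal
    rw [C_mul_X_mem_xSqIdeal_iff hvu' hu', Int.natCast_dvd_natCast] at h₁
    rw [C_mul_X_mem_xSqIdeal_iff hvu hu, Int.natCast_dvd_natCast] at h₂
    exact Nat.dvd_antisymm h₂ h₁
  have h₁ : C (u : ℤ) + C (c : ℤ) * X ∈ xSqIdeal u' v' c' := h ▸ C_add_C_mul_X_mem_xSqIdeal
  have h₂ : C (u' : ℤ) + C (c' : ℤ) * X ∈ xSqIdeal u v c := h ▸ C_add_C_mul_X_mem_xSqIdeal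
  rw [mem_xSqIdeal hvu' hu'] at h₁
  rw [mem_xSqIdeal hvu hu] at h₂
  simp only [map_natCast, coeff_add, coeff_natCast_ite, ↓reduceIte, mul_coeff_zero, coeff_X_zero,
    mul_zero, add_zero, one_ne_zero, CharP.cast_eq_zero, coeff_mul_X, zero_add] at h₁ h₂
  have hu : u = u' :=
    Nat.dvd_antisymm (Int.natCast_dvd_natCast.mp h₂.1) (Int.natCast_dvd_natCast.mp h₁.1)
  subst hu hv
  refine ⟨rfl, rfl, (Nat.ModEq.eq_of_lt_of_lt (Nat.modEq_iff_dvd.mpr ?_) hc' hc).symm⟩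
  rw [← mul_dvd_mul_iff_left (show (u : ℤ) ≠ 0 by exact_mod_cast hu), mul_sub, mul_comm (u : ℤ) c']
  exact h₁.2

end xSqIdeal

theorem natCard_quotient_xSqIdeal_pow {p k b c : ℕ} (hp : p ≠ 0) (hbk : 2 * b ≤ k) :
    Nat.card (ℤ[X] ⧸ xSqIdeal (p ^ (k - b)) (p ^ b) c) = p ^ k := by
  rw [natCard_quotient_xSqIdeal (pow_dvd_pow p (by omega)) (pow_ne_zero _ hp), ← pow_add]
  congr 1
  omega

theorem exists_eq_xSqIdeal_of_natCard_eq_pow {p k : ℕ} (hp : p.Prime) {J : Ideal ℤ[X]}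
    (hX : X ^ 2 ∈ J) (hJ : Nat.card (ℤ[X] ⧸ J) = p ^ k) :
    ∃ b c : ℕ, 2 * b ≤ k ∧ c < p ^ b ∧ J = xSqIdeal (p ^ (k - b)) (p ^ b) c := by
  obtain ⟨u, v, c, hvu, hu, hc, rfl⟩ := exists_eq_xSqIdeal hX (hJ ▸ pow_ne_zero _ hp.ne_zero)
  rw [natCard_quotient_xSqIdeal hvu hu] at hJ
  obtain ⟨b, hbk, rfl⟩ := (Nat.dvd_prime_pow hp).mp (Dvd.intro_left _ hJ)
  obtain rfl : u = p ^ (k - b) := by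
    rw [← Nat.pow_div hbk hp.pos, ← hJ, Nat.mul_div_cancel _ (pow_pos hp.pos _)]
  have := (Nat.pow_dvd_pow_iff_le_right hp.one_lt).mp hvu
  exact ⟨b, c, by omega, hc, rfl⟩

section Count

variable {lam : ℤ} {p : ℕ}

def cubicIdealParams (p l : ℕ) : Finset (Σ _ : ℕ, Σ _ : ℕ, ℕ) :=
  (range (l + 1)).sigma fun k => (range (k / 2 + 1)).sigma fun b => range (p ^ b)

noncomputable def cubicIdeal (lam : ℤ) (p l : ℕ) : (Σ _ : ℕ, Σ _ : ℕ, ℕ) → Ideal ℤ[X]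
  | ⟨k, b, c⟩ => xSqIdeal (p ^ (k - b)) (p ^ b) c ⊓
      (Ideal.span {((p ^ (l - k) : ℕ) : ℤ)}).comap (evalRingHom lam)

theorem mem_cubicIdealParams {p l k b c : ℕ} :
    ⟨k, b, c⟩ ∈ cubicIdealParams p l ↔ k ≤ l ∧ 2 * b ≤ k ∧ c < p ^ b := by
  simp only [cubicIdealParams, mem_sigma, mem_range]
  omega

theorem card_cubicIdealParams (p l : ℕ) :
    (cubicIdealParams p l).card = ∑ k ∈ range (l + 1), ∑ b ∈ range (k / 2 + 1), p ^ b := by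
  simp [cubicIdealParams]

theorem eq_top_of_natCast_pow_mem (hp : p.Prime) (hpl : ¬ (p : ℤ) ∣ lam) {I : Ideal ℤ[X]} {m : ℕ}
    (hX : X ^ 2 ∈ I) (hXlam : X - C lam ∈ I) (hpm : ((p ^ m : ℕ) : ℤ[X]) ∈ I) : I = ⊤ := by
  refine eq_top_of_X_sq_mem_of_X_sub_C_mem (q := (p : ℤ) ^ m) ?_ hX hXlam (by simpa using hpm)
  exact ((Nat.prime_iff_prime_int.mp hp).coprime_iff_not_dvd.mpr hpl).pow_left

theorem exists_eq_cubicIdeal (hp : p.Prime) (hpl : ¬ (p : ℤ) ∣ lam) {l : ℕ} {J : Ideal ℤ[X]}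
    (hfJ : Ideal.span {X ^ 2 * (X - C lam)} ≤ J) (hJ : Nat.card (ℤ[X] ⧸ J) = p ^ l) :
    ∃ t ∈ cubicIdealParams p l, J = cubicIdeal lam p l t := by
  set A := J ⊔ Ideal.span {X ^ 2}
  set B := J ⊔ Ideal.span {X - C lam}
  have hXA : X ^ 2 ∈ A := Ideal.mem_sup_right (Ideal.mem_span_singleton_self _)
  have hXB : X - C lam ∈ B := Ideal.mem_sup_right (Ideal.mem_span_singleton_self _)
  have hAB : A ⊔ B = ⊤ := eq_top_of_natCast_pow_mem hp hpl (Ideal.mem_sup_left hXA)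
    (Ideal.mem_sup_right hXB)
    (Ideal.mem_sup_left (Ideal.mem_sup_left (hJ ▸ J.natCast_natCard_quotient_mem)))
  have hJAB : J = A ⊓ B :=
    Ideal.eq_sup_inf_sup (by rwa [Ideal.span_singleton_mul_span_singleton]) hAB
  have hcard : Nat.card (ℤ[X] ⧸ A) * Nat.card (ℤ[X] ⧸ B) = p ^ l := by
    rw [← Ideal.natCard_quotient_inf hAB, ← hJAB, hJ]
  obtain ⟨k, hkl, hA⟩ := (Nat.dvd_prime_pow hp).mp (Dvd.intro _ hcard)
  have hB : Nat.card (ℤ[X] ⧸ B) = p ^ (l - k) := by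
    rw [← Nat.pow_div hkl hp.pos, ← hcard, hA, Nat.mul_div_cancel_left _ (pow_pos hp.pos _)]
  obtain ⟨b, c, hbk, hc, hAeq⟩ := exists_eq_xSqIdeal_of_natCard_eq_pow hp hXA hA
  refine ⟨⟨k, b, c⟩, mem_cubicIdealParams.mpr ⟨hkl, hbk, hc⟩, ?_⟩
  rw [cubicIdeal, ← hAeq, ← hB, ← eq_comap_evalRingHom_of_X_sub_C_mem hXB, hJAB]

theorem natCast_pow_mem_comap_evalRingHom (lam : ℤ) (p m : ℕ) :
    ((p ^ m : ℕ) : ℤ[X]) ∈ (Ideal.span {((p ^ m : ℕ) : ℤ)}).comap (evalRingHom lam) := by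
  rw [Ideal.mem_comap, map_natCast]
  exact Ideal.mem_span_singleton_self _

theorem natCard_quotient_cubicIdeal (hp : p.Prime) (hpl : ¬ (p : ℤ) ∣ lam) {l k b c : ℕ}
    (hkl : k ≤ l) (hbk : 2 * b ≤ k) : Nat.card (ℤ[X] ⧸ cubicIdeal lam p l ⟨k, b, c⟩) = p ^ l := by
  have hA := natCard_quotient_xSqIdeal_pow (c := c) hp.ne_zero hbk
  have hAB := eq_top_of_natCast_pow_mem hp hpl (Ideal.mem_sup_left X_sq_mem_xSqIdeal)
    (Ideal.mem_sup_right (X_sub_C_mem_comap_evalRingHom lam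
      (Ideal.span {((p ^ (l - k) : ℕ) : ℤ)})))
    (Ideal.mem_sup_left (hA ▸ Ideal.natCast_natCard_quotient_mem _))
  rw [cubicIdeal, Ideal.natCard_quotient_inf hAB, hA, natCard_quotient_comap_evalRingHom,
    ← pow_add]
  congr 1
  omega

theorem cubicIdeal_sup_span_X_sq (hp : p.Prime) (hpl : ¬ (p : ℤ) ∣ lam) (l k b c : ℕ) :
    cubicIdeal lam p l ⟨k, b, c⟩ ⊔ Ideal.span {X ^ 2} = xSqIdeal (p ^ (k - b)) (p ^ b) c := by
  set B := (Ideal.span {((p ^ (l - k) : ℕ) : ℤ)}).comap (evalRingHom lam)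
  have hXA : Ideal.span {X ^ 2} ≤ xSqIdeal (p ^ (k - b)) (p ^ b) c := by
    rw [Ideal.span_le, Set.singleton_subset_iff]
    exact X_sq_mem_xSqIdeal
  have hXB : Ideal.span {X ^ 2} ⊔ B = ⊤ := eq_top_of_natCast_pow_mem hp hpl
    (Ideal.mem_sup_left (Ideal.mem_span_singleton_self _))
    (Ideal.mem_sup_right (X_sub_C_mem_comap_evalRingHom _ _))
    (Ideal.mem_sup_right (natCast_pow_mem_comap_evalRingHom _ _ _))
  rw [cubicIdeal, sup_comm, inf_comm, ← sup_inf_assoc_of_le B hXA, hXB, top_inf_eq]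

theorem setOf_eq_image_cubicIdeal (hp : p.Prime) (hpl : ¬ (p : ℤ) ∣ lam) (l : ℕ) :
    {J : Ideal ℤ[X] | Ideal.span {X ^ 2 * (X - C lam)} ≤ J ∧ Nat.card (ℤ[X] ⧸ J) = p ^ l} =
      cubicIdeal lam p l '' cubicIdealParams p l := by
  ext J
  constructor
  · rintro ⟨hfJ, hJ⟩
    exact exists_eq_cubicIdeal hp hpl hfJ hJ |>.imp fun _ ⟨ht, hJt⟩ => ⟨ht, hJt.symm⟩
  · rintro ⟨⟨k, b, c⟩, ht, rfl⟩
    obtain ⟨hkl, hbk, -⟩ := mem_cubicIdealParams.mp ht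
    refine ⟨?_, natCard_quotient_cubicIdeal hp hpl hkl hbk⟩
    rw [Ideal.span_le, Set.singleton_subset_iff]
    exact ⟨Ideal.mul_mem_right _ _ X_sq_mem_xSqIdeal,
      Ideal.mul_mem_left _ _ (X_sub_C_mem_comap_evalRingHom _ _)⟩

theorem injOn_cubicIdeal (hp : p.Prime) (hpl : ¬ (p : ℤ) ∣ lam) (l : ℕ) :
    Set.InjOn (cubicIdeal lam p l) (cubicIdealParams p l) := by
  rintro ⟨k, b, c⟩ ht ⟨k', b', c'⟩ ht' h
  obtain ⟨-, hbk, hc⟩ := mem_cubicIdealParams.mp ht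
  obtain ⟨-, hbk', hc'⟩ := mem_cubicIdealParams.mp ht'
  obtain ⟨hu, hv, rfl⟩ := eq_of_xSqIdeal_eq (pow_dvd_pow p (show b ≤ k - b by omega))
    (pow_ne_zero _ hp.ne_zero) hc (pow_dvd_pow p (show b' ≤ k' - b' by omega))
    (pow_ne_zero _ hp.ne_zero) hc'
    (by rw [← cubicIdeal_sup_span_X_sq hp hpl l, h, cubicIdeal_sup_span_X_sq hp hpl l])
  obtain rfl := Nat.pow_right_injective hp.two_le hv
  obtain rfl : k = k' := by have := Nat.pow_right_injective hp.two_le hu; omega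
  rfl

end Count

theorem local_factor_lambda_coprime_general (lam : ℤ)
    (p : ℕ) (hp : p.Prime) (hpl : ¬ (p : ℤ) ∣ lam) :
    (PowerSeries.mk fun l =>
        (idealCount
          (Polynomial ℤ ⧸ Ideal.span
            {(Polynomial.X : Polynomial ℤ) ^ 2 * (Polynomial.X - Polynomial.C lam)})
          (p ^ l) : ℤ)) *
      (1 - PowerSeries.X) ^ 2 * (1 - PowerSeries.C (p : ℤ) * PowerSeries.X ^ 2) = 1 := by
  have hcount (l : ℕ) : idealCount (ℤ[X] ⧸ Ideal.span {X ^ 2 * (X - C lam)}) (p ^ l) =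
      ∑ k ∈ range (l + 1), ∑ b ∈ range (k / 2 + 1), p ^ b := by
    rw [idealCount_eq_ncard_of_surjective Ideal.Quotient.mk_surjective, Ideal.mk_ker,
      setOf_eq_image_cubicIdeal hp hpl, (injOn_cubicIdeal hp hpl l).ncard_image,
      Set.ncard_coe_finset, card_cubicIdealParams]
  simp_rw [hcount]
  push_cast
  rw [show ∀ F G H : PowerSeries ℤ, F * G ^ 2 * H = F * G * H * G from fun _ _ _ => by ring,
    PowerSeries.mk_sum_range_mul_one_sub_X, PowerSeries.mk_geom_sum_mul_one_sub_C_mul_X_sq,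
    PowerSeries.mk_one_mul_one_sub_eq_one]

/-- For `f = X²(X - λ)` and a prime `p ∤ λ`, the local ideal zeta factor of `ℤ[X]/(f)`
at `p` equals `(1 - X)⁻² (1 - pX²)⁻¹`, i.e. its product with `(1 - X)² (1 - pX²)` is `1`
in `ℤ⟦X⟧`. -/
theorem local_factor_lambda_coprime (lam : ℤ) (hlam : lam ≠ 0)
    (p : ℕ) (hp : p.Prime) (hpl : ¬ (p : ℤ) ∣ lam) :
    (PowerSeries.mk fun l =>
        (idealCount
          (Polynomial ℤ ⧸ Ideal.span
            {(Polynomial.X : Polynomial ℤ) ^ 2 * (Polynomial.X - Polynomial.C lam)})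
          (p ^ l) : ℤ)) *
      (1 - PowerSeries.X) ^ 2 * (1 - PowerSeries.C (p : ℤ) * PowerSeries.X ^ 2) = 1 :=
  local_factor_lambda_coprime_general lam p hp hpl
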